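/- arXiv:2210.14146 — 4 statements merged into one kernel-verified Lean document; each statement's English description precedes it below -/
import Mathlib

section
/- Let T be a Grothendieck site. If a functor P : Shv(T)^op → Set preserves all small limits, then the composite P ∘ h^♯ : T^op → Set is a sheaf on T, and moreover the right Kan extension Ran_{h^♯}(P ∘ h^♯) is naturally isomorphic to P. -/
open CategoryTheory Limits Opposite

universe u

/-- `h^♯ : T ⥤ Shv(T)`: the Yoneda embedding followed by sheafification. -/
noncomputable def hSharp {C : Type u} [SmallCategory C] (J : GrothendieckTopology C) :
    C ⥤ Sheaf J (Type u) :=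
  yoneda ⋙ presheafToSheaf J (Type u)

/-!
Sheafification `a` is a reflective localization, so `h^♯ = a ∘ y` is dense: every sheaf `F` is the
canonical colimit of the `h^♯ X` over all `h^♯ X ⟶ F`, this diagram being the image under `a` of the
canonical diagram of `F` as a presheaf. A limit-preserving `P` turns these canonical colimits into
the limits computing the pointwise right Kan extension of `P ∘ h^♯` along `h^♯`.

For the sheaf property: `Hom(h^♯ -, F) ≅ F` is a sheaf for every sheaf `F`, so `h^♯` sends the
cocone of each covering sieve to a colimit cocone, which `P` turns into the limit cone expressing
the sheaf condition of `P ∘ h^♯` for that sieve.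
-/

namespace CategoryTheory

universe v₁ v₂ v₃ u₁ u₂ u₃

variable {C : Type u₁} [Category.{v₁} C] {D : Type u₂} [Category.{v₂} D]

section Sheaves

variable (J : GrothendieckTopology C) {G : C ⥤ D}

noncomputable def isColimitMapCoconeOfIsSheafOpCompYoneda
    (hG : ∀ d : D, Presheaf.IsSheaf J (G.op ⋙ yoneda.obj d))
    {X : C} {S : Sieve X} (hS : S ∈ J X) : IsColimit (G.mapCocone S.arrows.cocone) :=
  (Cocone.isColimitYonedaEquiv _).symm fun d =>
    ((Presheaf.isSheaf_iff_isLimit J _).1 (hG d) S hS).some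

theorem Presheaf.isSheaf_op_comp_of_isColimit_mapCocone {A : Type u₃} [Category.{v₃} A]
    (hG : ∀ ⦃X : C⦄ (S : Sieve X), S ∈ J X → IsColimit (G.mapCocone S.arrows.cocone))
    (P : Dᵒᵖ ⥤ A) [PreservesLimitsOfSize.{v₁, max u₁ v₁} P] :
    Presheaf.IsSheaf J (G.op ⋙ P) :=
  (Presheaf.isSheaf_iff_isLimit J _).2 fun _ S hS => ⟨isLimitOfPreserves P (hG S hS).op⟩

end Sheaves

section Dense

variable {E : Type u₃} [Category.{v₃} E] {L : D ⥤ E} {R : E ⥤ D}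

def Adjunction.costructuredArrowEquivalence (adj : L ⊣ R) (F : C ⥤ D) (Y : E) :
    CostructuredArrow F (R.obj Y) ≌ CostructuredArrow (F ⋙ L) Y where
  functor :=
    { obj := fun j => CostructuredArrow.mk ((adj.homEquiv _ _).symm j.hom)
      map := fun g => CostructuredArrow.homMk g.left (by
        simp [← adj.homEquiv_naturality_left_symm]) }
  inverse :=
    { obj := fun j => CostructuredArrow.mk (adj.homEquiv _ _ j.hom)
      map := fun g => CostructuredArrow.homMk g.left (by
        simpa [← adj.homEquiv_naturality_left] using CostructuredArrow.w g) }
  unitIso := NatIso.ofComponents fun j => CostructuredArrow.isoMk (Iso.refl _)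
  counitIso := NatIso.ofComponents fun j => CostructuredArrow.isoMk (Iso.refl _)

noncomputable def Functor.DenseAt.compLeftAdjoint {F : C ⥤ D} (adj : L ⊣ R) {Y : E}
    (hY : F.DenseAt (R.obj Y)) [IsIso (adj.counit.app Y)] : (F ⋙ L).DenseAt Y :=
  have := adj.leftAdjoint_preservesColimits
  IsColimit.ofWhiskerEquivalence (adj.costructuredArrowEquivalence F Y)
    (IsColimit.ofIsoColimit (isColimitOfPreserves L hY)
      (Cocone.ext (asIso (adj.counit.app Y) : L.obj (R.obj Y) ≅ Y) fun j => by
        change L.map (𝟙 _ ≫ j.hom) ≫ adj.counit.app Y = 𝟙 _ ≫ (adj.homEquiv _ _).symm j.hom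
        rw [Category.id_comp, Category.id_comp, adj.homEquiv_counit]))

lemma Functor.IsDense.comp_of_adjunction (F : C ⥤ D) [F.IsDense] (adj : L ⊣ R) [R.Full]
    [R.Faithful] : (F ⋙ L).IsDense where
  isDenseAt _ := ⟨(F.denseAt _).compLeftAdjoint adj⟩

noncomputable def Functor.isPointwiseRightKanExtensionOfIsDense (F : C ⥤ D) [F.IsDense]
    (G : Dᵒᵖ ⥤ E) [PreservesLimitsOfSize.{v₁, max u₁ v₂} G] :
    (RightExtension.mk G (𝟙 (F.op ⋙ G))).IsPointwiseRightKanExtension := fun Y =>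
  IsLimit.ofIsoLimit
    ((isLimitOfPreserves G (F.denseAt Y.unop).op).whiskerEquivalence
      (costructuredArrowOpEquivalence F Y.unop).symm)
    (Cone.ext (Iso.refl _) fun j => by
      change G.map (𝟙 _ ≫ j.hom.unop).op = 𝟙 _ ≫ G.map j.hom ≫ 𝟙 _
      simp)

end Dense

end CategoryTheory

section hSharp

variable {C : Type u} [SmallCategory C] (J : GrothendieckTopology C)

instance hSharp_isDense : (hSharp J).IsDense :=
  Functor.IsDense.comp_of_adjunction yoneda (sheafificationAdjunction J (Type u))

lemma isSheaf_hSharp_op_comp_yoneda_obj (F : Sheaf J (Type u)) :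
    Presheaf.IsSheaf J ((hSharp J).op ⋙ yoneda.obj F) :=
  (Presheaf.isSheaf_of_iso_iff
    (Functor.isoWhiskerLeft yoneda.op ((sheafificationAdjunction J _).compYonedaIso.app F).symm ≪≫
      curriedYonedaLemma'.app F.obj)).2 F.property

end hSharp

/-- If `P : Shv(T)ᵒᵖ ⥤ Set` preserves all small limits, then `P ∘ h^♯` is a sheaf,
and `P` (together with the identity 2-cell) is a right Kan extension of `P ∘ h^♯`
along `(h^♯)ᵒᵖ`, i.e. `Ran_{h^♯}(P ∘ h^♯) ≅ P`. -/
theorem stmt_1 {C : Type u} [SmallCategory C] (J : GrothendieckTopology C)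
    (P : (Sheaf J (Type u))ᵒᵖ ⥤ Type u) [PreservesLimitsOfSize.{u, u} P] :
    Presheaf.IsSheaf J ((hSharp J).op ⋙ P) ∧
      P.IsRightKanExtension (𝟙 ((hSharp J).op ⋙ P)) :=
  ⟨Presheaf.isSheaf_op_comp_of_isColimit_mapCocone J
      (fun _ _ hS => isColimitMapCoconeOfIsSheafOpCompYoneda J
        (isSheaf_hSharp_op_comp_yoneda_obj J) hS) P,
    ((hSharp J).isPointwiseRightKanExtensionOfIsDense P).isRightKanExtension⟩
end

section
/- Let T be a Grothendieck site. If P : T^op → Set is a sheaf, then the right Kan extension Ran_{h^♯}(P) : Shv(T)^op → Set preserves all small limits, and the restriction Ran_{h^♯}(P) ∘ h^♯ is naturally isomorphic to P. -/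
/-
Sheafification and the Yoneda lemma give `Hom(h^♯ c, F) ≅ F(c)` naturally in `c` and in the
sheaf `F`, so the restricted Yoneda functor `F ↦ Hom(h^♯ -, F)` is the fully faithful inclusion
`Shv(T) ⊆ Psh(T)`. For any functor `F` with fully faithful restricted Yoneda functor, a
representable `Hom(-, Y)` is the right Kan extension of its restriction along `F.op`: an element
`x ∈ G(X)` of a competing extension yields a natural transformation `Hom(F -, X) ⟶ Hom(F -, Y)`,
which comes from a unique map `X ⟶ Y`. Applied to `Y = P`, this exhibits `Ran_{h^♯}(P)` as the
representable functor `Hom(-, P)`, which preserves limits, and its restriction as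
`Hom(h^♯ -, P) ≅ P`.
-/

open CategoryTheory Limits Opposite

universe u

namespace CategoryTheory

universe v u₁ u₂

/-- `restrictedULiftYoneda F` without the `ULift`, for hom types in a common universe. -/
abbrev Functor.restrictedYoneda {C : Type u₁} {D : Type u₂} [Category.{v} C] [Category.{v} D]
    (F : C ⥤ D) : D ⥤ Cᵒᵖ ⥤ Type v :=
  yoneda ⋙ (Functor.whiskeringLeft _ _ _).obj F.op

noncomputable def Adjunction.restrictedYonedaCompIso {C : Type u} [SmallCategory C]
    {E : Type u₂} [Category.{u} E] {L : (Cᵒᵖ ⥤ Type u) ⥤ E} {R : E ⥤ Cᵒᵖ ⥤ Type u}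
    (adj : L ⊣ R) : (yoneda ⋙ L).restrictedYoneda ≅ R :=
  Functor.isoWhiskerRight adj.compYonedaIso.symm ((Functor.whiskeringLeft _ _ _).obj yoneda.op) ≪≫
    Functor.associator _ _ _ ≪≫ Functor.isoWhiskerLeft R curriedYonedaLemma' ≪≫ R.rightUnitor

namespace Functor

variable {C : Type u₁} {D : Type u₂} [Category.{v} C] [Category.{v} D] {F : C ⥤ D}

section

variable {Y : D} {G : Dᵒᵖ ⥤ Type v} (β : F.op ⋙ G ⟶ F.op ⋙ yoneda.obj Y)

@[simps]
def restrictedYonedaMapOfElement {X : Dᵒᵖ} (x : G.obj X) :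
    F.restrictedYoneda.obj X.unop ⟶ F.restrictedYoneda.obj Y where
  app c := ↾fun g => β.app c (G.map g.op x)
  naturality c c' f := by
    ext g
    simpa using NatTrans.naturality_apply β f (G.map g.op x)

variable (hF : F.restrictedYoneda.FullyFaithful)

def liftOfFullyFaithfulRestrictedYoneda : G ⟶ yoneda.obj Y where
  app X := ↾fun x => hF.preimage (restrictedYonedaMapOfElement β x)
  naturality X X' f := by
    ext x
    change hF.preimage (restrictedYonedaMapOfElement β (G.map f x)) =
      f.unop ≫ hF.preimage (restrictedYonedaMapOfElement β x)
    refine hF.map_injective ?_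
    rw [Functor.map_comp, hF.map_preimage, hF.map_preimage]
    ext c g
    simp

theorem whiskerLeft_liftOfFullyFaithfulRestrictedYoneda :
    whiskerLeft F.op (liftOfFullyFaithfulRestrictedYoneda β hF) = β := by
  ext c x
  change hF.preimage (restrictedYonedaMapOfElement β x) = β.app c x
  simpa using ConcreteCategory.congr_hom
    (congr_app (hF.map_preimage (restrictedYonedaMapOfElement β x)) c) (𝟙 (F.obj c.unop))

theorem eq_liftOfFullyFaithfulRestrictedYoneda {m : G ⟶ yoneda.obj Y}
    (hm : whiskerLeft F.op m = β) : m = liftOfFullyFaithfulRestrictedYoneda β hF := by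
  subst hm
  ext X x
  change m.app X x = hF.preimage _
  refine hF.map_injective ?_
  rw [hF.map_preimage]
  ext c g
  simp

end

theorem isRightKanExtension_yoneda_obj_of_fullyFaithful (hF : F.restrictedYoneda.FullyFaithful)
    (Y : D) : (yoneda.obj Y).IsRightKanExtension (𝟙 (F.op ⋙ yoneda.obj Y)) := by
  refine ⟨⟨IsTerminal.ofUniqueHom (fun G => ?_) (fun G m => ?_)⟩⟩
  · exact CostructuredArrow.homMk (liftOfFullyFaithfulRestrictedYoneda G.hom hF)
      ((Category.comp_id _).trans (whiskerLeft_liftOfFullyFaithfulRestrictedYoneda G.hom hF))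
  · exact CostructuredArrow.hom_ext _ _
      (eq_liftOfFullyFaithfulRestrictedYoneda G.hom hF ((Category.comp_id _).symm.trans m.w))

end Functor

end CategoryTheory

/-- If `P : Tᵒᵖ ⥤ Set` is a sheaf, then its right Kan extension `Ran_{h^♯}(P)`
along `h^♯` exists, preserves all small limits, and its restriction along `h^♯` is
naturally isomorphic to `P` (via the counit `α` being an isomorphism). -/
theorem stmt_2 {C : Type u} [SmallCategory C] (J : GrothendieckTopology C)
    (P : Cᵒᵖ ⥤ Type u) (hP : Presheaf.IsSheaf J P) :
    ∃ (R : (Sheaf J (Type u))ᵒᵖ ⥤ Type u) (α : (hSharp J).op ⋙ R ⟶ P),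
      R.IsRightKanExtension α ∧ PreservesLimitsOfSize.{u, u} R ∧ IsIso α := by
  let S : Sheaf J (Type u) := ⟨P, hP⟩
  let eR : (hSharp J).restrictedYoneda ≅ sheafToPresheaf J (Type u) :=
    (sheafificationAdjunction J (Type u)).restrictedYonedaCompIso
  let e : (hSharp J).op ⋙ yoneda.obj S ≅ P := eR.app S
  refine ⟨yoneda.obj S, e.hom, ?_, inferInstance, inferInstance⟩
  have hRan := Functor.isRightKanExtension_yoneda_obj_of_fullyFaithful
    ((fullyFaithfulSheafToPresheaf J (Type u)).ofIso eR.symm) S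
  exact (Functor.isRightKanExtension_iff_of_iso₂ _ _ e (Iso.refl _) (by simp)).1 hRan
end

section
/- Every locally weakly contractible 1-topos is replete. In particular, if a 1-topos X has a generating collection of weakly contractible objects, then for any ℕ-indexed inverse system (F_n) in X in which each transition map F_{n+1} → F_n is an epimorphism, the projection lim F → F_n is an epimorphism for every n. -/
open CategoryTheory Limits Opposite

universe u

variable {C : Type u} [SmallCategory C]

/-- A category (e.g. a 1-topos) is *replete* if for every `ℕ`-indexed inverse system
in which all transition maps are epimorphisms, the projections from the inverse limit
are epimorphisms. -/
def IsReplete (D : Type*) [CategoryTheory.Category D]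
    [HasLimitsOfShape ℕᵒᵖ D] : Prop :=
  ∀ F : ℕᵒᵖ ⥤ D,
    (∀ n : ℕ, Epi (F.map (homOfLE (Nat.le_succ n)).op)) →
    ∀ n : ℕ, Epi (limit.π F (op n))

/-- An object `Y` of a 1-topos is *weakly contractible* if every epimorphism onto `Y`
splits. -/
def WeaklyContractible {D : Type*} [CategoryTheory.Category D] (Y : D) : Prop :=
  ∀ (G : D) (φ : G ⟶ Y), Epi φ → ∃ s : Y ⟶ G, s ≫ φ = 𝟙 Y

instance instHasColimitsSheafTypeStmt16 (J : GrothendieckTopology C) :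
    HasColimitsOfSize.{u, u} (Sheaf J (Type u)) :=
  Sheaf.instHasColimitsOfSize

/-!
In a sheaf topos epimorphisms are stable under pullback, so a weakly contractible
object `Y` is projective (split the pullback of an epimorphism along a map out of `Y`), and so
is a coproduct of such objects. Given a projective `P` with an epimorphism `P ↠ Fₙ`, lifting
step by step along the epimorphisms `F_{m+1} ↠ F_m` produces a cone over the tower with
vertex `P`, so `P ↠ Fₙ` factors through `lim F → Fₙ`, which is therefore an epimorphism.
-/

universe w

namespace CategoryTheory

theorem WeaklyContractible.projective {D : Type*} [Category D] [HasPullbacks D]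
    [(MorphismProperty.epimorphisms D).IsStableUnderBaseChange]
    {Y : D} (hY : WeaklyContractible Y) : Projective Y where
  factors {_ _} f g _ := by
    have : Epi (pullback.fst f g) :=
      (MorphismProperty.epimorphisms D).pullback_fst f g (.infer_property g)
    obtain ⟨s, hs⟩ := hY _ (pullback.fst f g) this
    refine ⟨s ≫ pullback.snd f g, ?_⟩
    rw [Category.assoc, ← pullback.condition, ← Category.assoc, hs, Category.id_comp]

theorem Presheaf.isLocallySurjective_of_isPullback {A : Type*} [Category A]
    {J : GrothendieckTopology A} {P Y X B : Aᵒᵖ ⥤ Type w}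
    {fst : P ⟶ Y} {snd : P ⟶ X} {f : Y ⟶ B} {g : X ⟶ B} (sq : IsPullback fst snd f g)
    (hg : Presheaf.IsLocallySurjective J g) : Presheaf.IsLocallySurjective J fst where
  imageSieve_mem {U} y := by
    refine J.superset_covering ?_ (hg.imageSieve_mem (f.app (op U) y))
    rintro V h ⟨x, hx⟩
    obtain ⟨p, hp, -⟩ := Types.exists_of_isPullback (sq.map ((evaluation _ _).obj (op V)))
      (Y.map h.op y) x (by simpa [NatTrans.naturality_apply] using hx.symm)
    exact ⟨p, hp⟩

instance Sheaf.epimorphisms_isStableUnderBaseChange {A : Type*} [Category A]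
    {J : GrothendieckTopology A} [HasSheafify J (Type w)] :
    (MorphismProperty.epimorphisms (Sheaf J (Type w))).IsStableUnderBaseChange where
  of_isPullback {_ _ _ _ _ _ _ g'} sq hg := by
    rw [MorphismProperty.epimorphisms.iff, ← Sheaf.isLocallySurjective_iff_epi] at hg ⊢
    exact Presheaf.isLocallySurjective_of_isPullback (sq.flip.map (sheafToPresheaf J _)) hg

section Tower

variable {D : Type*} [Category D] (F : ℕᵒᵖ ⥤ D)
  [∀ m : ℕ, Epi (F.map (homOfLE (Nat.le_succ m)).op)]
  {P : D} [Projective P] {n : ℕ} (f : P ⟶ F.obj (op n))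

noncomputable def towerLift : ∀ m : ℕ, P ⟶ F.obj (op m)
  | 0 => f ≫ F.map (homOfLE (Nat.zero_le n)).op
  | m + 1 =>
    if h : m + 1 ≤ n then f ≫ F.map (homOfLE h).op
    else Projective.factorThru (towerLift m) (F.map (homOfLE (Nat.le_succ m)).op)

theorem towerLift_of_le {m : ℕ} (h : m ≤ n) :
    towerLift F f m = f ≫ F.map (homOfLE h).op := by
  cases m with
  | zero => rfl
  | succ m => simp only [towerLift, dif_pos h]

theorem towerLift_succ_comp (m : ℕ) :
    towerLift F f (m + 1) ≫ F.map (homOfLE (Nat.le_succ m)).op = towerLift F f m := by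
  by_cases h : m + 1 ≤ n
  · rw [towerLift_of_le F f h, towerLift_of_le F f (Nat.le_of_succ_le h),
      Category.assoc, ← F.map_comp]
    rfl
  · simp only [towerLift, dif_neg h, Projective.factorThru_comp]

theorem exists_comp_limit_π_eq_of_projective [HasLimit F] :
    ∃ g : P ⟶ limit F, g ≫ limit.π F (op n) = f := by
  let c : Cone F := ⟨P, NatTrans.ofOpSequence (towerLift F f)
    fun m => by simpa using (towerLift_succ_comp F f m).symm⟩
  refine ⟨limit.lift F c, ?_⟩
  rw [limit.lift_π]
  change towerLift F f n = f
  simp [towerLift_of_le F f le_rfl]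

theorem epi_limit_π_of_projective_of_epi [HasLimit F] [Epi f] : Epi (limit.π F (op n)) := by
  obtain ⟨g, hg⟩ := exists_comp_limit_π_eq_of_projective F f
  exact epi_of_epi_fac hg

end Tower

end CategoryTheory

/-- Every locally weakly contractible 1-topos is replete: if every object of the topos
`Shv(T)` admits an epimorphism from a coproduct of weakly contractible objects, then
for every `ℕ`-indexed inverse system with epimorphic transition maps the projections
from the limit are epimorphisms. -/
theorem stmt_16 (J : GrothendieckTopology C)
    (hlwc : ∀ F : Sheaf J (Type u),
      ∃ (ι : Type u) (Y : ι → Sheaf J (Type u)) (φ : (∐ Y) ⟶ F),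
        (∀ i : ι, WeaklyContractible (Y i)) ∧ Epi φ) :
    IsReplete (Sheaf J (Type u)) := by
  intro F hF n
  obtain ⟨ι, Y, φ, hY, hφ⟩ := hlwc (F.obj (op n))
  have := fun i => (hY i).projective
  exact epi_limit_π_of_projective_of_epi F φ
end

section
/- Let X be a replete 1-topos and let (G_n)_{n∈ℕ} be an inverse system of abelian group objects of X in which each transition map G_{n+1} → G_n is an epimorphism. Then lim^1_n G_n = 0, i.e., the map ∏ G_n → ∏ G_n, (x_n) ↦ (x_n − f_{n+1}(x_{n+1})), is an epimorphism of abelian group objects. -/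
open CategoryTheory Limits Opposite

universe u

variable {C : Type u} [SmallCategory C]

/-!
The tower `T_n = G_n ⊞ ∏ G` with transition maps `(g, a) ↦ (f g + a_n, a)` has epimorphic
transitions, since each is `f ⊞ 𝟙` followed by a unipotent automorphism. A compatible family
`(g_n, a)` in this tower is determined by `g = (g_n)`, because compatibility forces `a = d g`
with `d` the `lim¹` map. So `∏ G` is the limit, with the `0`-th projection followed by the
second factor equal to `d`; repleteness makes this projection an epimorphism, hence `d` is one.
Repleteness passes from sheaves of sets to sheaves of abelian groups because the forgetful
functor preserves limits and both preserves and reflects epimorphisms.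
-/

namespace CategoryTheory

section Lim1

variable {D : Type*} [Category D] [Preadditive D] [HasBinaryBiproducts D]
  [HasProductsOfShape ℕ D] (G : ℕᵒᵖ ⥤ D)

noncomputable def lim1Map : (∏ᶜ fun n : ℕ => G.obj (op n)) ⟶ ∏ᶜ fun n : ℕ => G.obj (op n) :=
  Pi.lift fun n => Pi.π _ n - Pi.π _ (n + 1) ≫ G.map (homOfLE (Nat.le_succ n)).op

noncomputable def lim1TowerMap (n : ℕ) :
    G.obj (op (n + 1)) ⊞ (∏ᶜ fun n : ℕ => G.obj (op n)) ⟶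
      G.obj (op n) ⊞ (∏ᶜ fun n : ℕ => G.obj (op n)) :=
  Biprod.ofComponents (G.map (homOfLE (Nat.le_succ n)).op) 0
    (Pi.π (fun m : ℕ => G.obj (op m)) n) (𝟙 _)

lemma lim1TowerMap_eq_map_comp_unipotentLower (n : ℕ) :
    lim1TowerMap G n = biprod.map (G.map (homOfLE (Nat.le_succ n)).op) (𝟙 _) ≫
      (Biprod.unipotentLower (Pi.π (fun m : ℕ => G.obj (op m)) n)).hom := by
  ext <;> simp [lim1TowerMap]

instance (n : ℕ) [Epi (G.map (homOfLE (Nat.le_succ n)).op)] : Epi (lim1TowerMap G n) := by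
  rw [lim1TowerMap_eq_map_comp_unipotentLower]
  infer_instance

@[simp]
lemma lim1TowerMap_fst (n : ℕ) :
    lim1TowerMap G n ≫ biprod.fst =
      biprod.fst ≫ G.map (homOfLE (Nat.le_succ n)).op +
        biprod.snd ≫ Pi.π (fun m : ℕ => G.obj (op m)) n := by
  simp [lim1TowerMap]

@[simp]
lemma lim1TowerMap_snd (n : ℕ) : lim1TowerMap G n ≫ biprod.snd = biprod.snd := by
  simp [lim1TowerMap]

-- Reducible, so that `(lim1Tower G).obj (op n)` is seen as a biproduct by `simp` and `rw`.
noncomputable abbrev lim1Tower : ℕᵒᵖ ⥤ D where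
  obj n := G.obj n ⊞ ∏ᶜ fun m : ℕ => G.obj (op m)
  map f := (Functor.ofOpSequence (X := fun n => G.obj (op n) ⊞ ∏ᶜ fun m : ℕ => G.obj (op m))
    (lim1TowerMap G)).map f
  map_id _ := Functor.map_id _ _
  map_comp _ _ := Functor.map_comp _ _ _

@[simp]
lemma lim1Tower_map_succ (n : ℕ) :
    (lim1Tower G).map (homOfLE (Nat.le_succ n)).op = lim1TowerMap G n :=
  Functor.ofOpSequence_map_homOfLE_succ _ n

lemma lift_lim1Map_comp_lim1TowerMap (n : ℕ) :
    biprod.lift (Pi.π (fun m : ℕ => G.obj (op m)) (n + 1)) (lim1Map G) ≫ lim1TowerMap G n =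
      biprod.lift (Pi.π (fun m : ℕ => G.obj (op m)) n) (lim1Map G) := by
  ext <;> simp [lim1Map]

noncomputable abbrev lim1Cone : Cone (lim1Tower G) where
  pt := ∏ᶜ fun n : ℕ => G.obj (op n)
  π := NatTrans.ofOpSequence
    (fun n => biprod.lift (Pi.π (fun m : ℕ => G.obj (op m)) n) (lim1Map G))
    (fun n => by
      rw [lim1Tower_map_succ]
      exact (Category.id_comp _).trans (lift_lim1Map_comp_lim1TowerMap G n).symm)

variable {G} in
lemma lim1Tower_cone_w (s : Cone (lim1Tower G)) (n : ℕ) :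
    s.π.app (op (n + 1)) ≫ lim1TowerMap G n = s.π.app (op n) := by
  simpa using s.w (homOfLE (Nat.le_succ n)).op

variable {G} in
lemma lim1Tower_cone_π_snd (s : Cone (lim1Tower G)) (n : ℕ) :
    s.π.app (op n) ≫ biprod.snd = s.π.app (op 0) ≫ biprod.snd := by
  induction n with
  | zero => rfl
  | succ n ih => rw [← ih, ← lim1Tower_cone_w s n, Category.assoc, lim1TowerMap_snd]

variable {G} in
lemma lim1Tower_cone_lift_comp_lim1Map (s : Cone (lim1Tower G)) :
    Pi.lift (fun n => s.π.app (op n) ≫ biprod.fst) ≫ lim1Map G =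
      s.π.app (op 0) ≫ biprod.snd := by
  refine Pi.hom_ext _ _ fun n => ?_
  have hfst := lim1Tower_cone_w s n =≫ biprod.fst
  rw [Category.assoc, lim1TowerMap_fst, Preadditive.comp_add] at hfst
  simp [lim1Map, ← hfst, ← lim1Tower_cone_π_snd s (n + 1)]

@[simp]
lemma lim1Cone_π_app (n : ℕ) :
    (lim1Cone G).π.app (op n) = biprod.lift (Pi.π (fun m : ℕ => G.obj (op m)) n) (lim1Map G) :=
  rfl

noncomputable def isLimitLim1Cone : IsLimit (lim1Cone G) where
  lift s := Pi.lift fun n => s.π.app (op n) ≫ biprod.fst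
  fac s := by
    rintro ⟨n⟩
    rw [lim1Cone_π_app]
    apply biprod.hom_ext
    · simp
    · simp [lim1Tower_cone_lift_comp_lim1Map, ← lim1Tower_cone_π_snd s n]
  uniq s m hm := Pi.hom_ext _ _ fun n => by
    simp [← hm (op n)]

theorem IsReplete.epi_lim1Map [HasLimitsOfShape ℕᵒᵖ D] (hD : IsReplete D)
    (hG : ∀ n : ℕ, Epi (G.map (homOfLE (Nat.le_succ n)).op)) : Epi (lim1Map G) := by
  have hπ : Epi (limit.π (lim1Tower G) (op 0)) :=
    hD _ (fun n => by rw [lim1Tower_map_succ]; infer_instance) 0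
  have hcone : (lim1Cone G).π.app (op 0) =
      ((isLimitLim1Cone G).conePointUniqueUpToIso (limit.isLimit _)).hom ≫
        limit.π (lim1Tower G) (op 0) :=
    (IsLimit.conePointUniqueUpToIso_hom_comp _ _ _).symm
  have hfac : lim1Map G = (lim1Cone G).π.app (op 0) ≫ biprod.snd := by simp
  rw [hfac, hcone]
  infer_instance

end Lim1

theorem IsReplete.of_functor {D E : Type*} [Category D] [Category E]
    [HasLimitsOfShape ℕᵒᵖ D] [HasLimitsOfShape ℕᵒᵖ E] (U : D ⥤ E)
    [PreservesLimitsOfShape ℕᵒᵖ U] [U.PreservesEpimorphisms] [U.ReflectsEpimorphisms]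
    (hE : IsReplete E) : IsReplete D := by
  intro F hF n
  have hπ : Epi (limit.π (F ⋙ U) (op n)) := hE _ (fun k => U.map_epi _) n
  have hUπ : Epi (U.map (limit.π F (op n))) := by
    rw [← preservesLimitIso_hom_π]
    infer_instance
  exact U.epi_of_epi_map hUπ

section Sheaf

variable (J : GrothendieckTopology C)

instance : (sheafCompose J (forget AddCommGrpCat.{u})).PreservesEpimorphisms where
  preserves f hf := by
    rw [← Sheaf.isLocallySurjective_iff_epi'] at hf ⊢
    exact (Presheaf.isLocallySurjective_iff_whisker_forget _ f.hom).mp hf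

instance : (sheafCompose J (forget AddCommGrpCat.{u})).ReflectsEpimorphisms where
  reflects f hf := by
    rw [← Sheaf.isLocallySurjective_iff_epi'] at hf ⊢
    exact (Presheaf.isLocallySurjective_iff_whisker_forget _ f.hom).mpr hf

end Sheaf

end CategoryTheory

/-- In a replete topos, `lim¹` of an inverse system of abelian group objects with
epimorphic transition maps vanishes: the map `∏ G_n → ∏ G_n`,
`(x_n) ↦ (x_n − f_{n+1}(x_{n+1}))`, is an epimorphism of abelian group objects
(i.e. of sheaves of abelian groups). -/
theorem stmt_17 (J : GrothendieckTopology C) (hrep : IsReplete (Sheaf J (Type u)))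
    (G : ℕᵒᵖ ⥤ Sheaf J AddCommGrpCat.{u})
    (htrans : ∀ n : ℕ, Epi (G.map (homOfLE (Nat.le_succ n)).op)) :
    Epi (Pi.lift (f := fun n : ℕ => G.obj (op n))
      (fun n : ℕ =>
        Pi.π (fun m : ℕ => G.obj (op m)) n -
          Pi.π (fun m : ℕ => G.obj (op m)) (n + 1) ≫
            G.map (homOfLE (Nat.le_succ n)).op)) :=
  (hrep.of_functor (sheafCompose J (forget AddCommGrpCat.{u}))).epi_lim1Map G htrans
end
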